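/- arXiv:1705.05397 — 6 statements merged into one kernel-verified Lean document; each statement's English description precedes it below -/
import Mathlib

section
/- Let E and Π be orthogonal projections on ℂⁿ, Ẽ = I − E, and for s > 0 and x ∈ ℝ let N^s_x = G_s(x−1)·E + G_s(x)·Ẽ. Then the matrix-valued integral S^s := ∫_{−∞}^{+∞} (N^s_x)† Π N^s_x dx equals E Π E + Ẽ Π Ẽ + e^{−1/(4s²)} (E Π Ẽ + Ẽ Π E). -/
open MeasureTheory Matrix

/-- The Gaussian pointer wavefunction with spread `s`:
`G_s(x) = (π s²)^(−1/4) exp(−x²/(2 s²))`. -/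
noncomputable def G (s x : ℝ) : ℝ :=
  (Real.pi * s ^ 2) ^ (-(1 / 4 : ℝ)) * Real.exp (-x ^ 2 / (2 * s ^ 2))

/-- The Kraus operators of the Gaussian pointer measurement of the projection `E`
with pointer spread `s`: `N^s_x = G_s(x−1)·E + G_s(x)·(I − E)`. -/
noncomputable def Ns {n : ℕ} (E : Matrix (Fin n) (Fin n) ℂ) (s x : ℝ) :
    Matrix (Fin n) (Fin n) ℂ :=
  (G s (x - 1) : ℂ) • E + (G s x : ℂ) • (1 - E)


lemma G_mul_eq (s a b : ℝ) (hs : 0 < s) (x : ℝ) :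
    G s (x - a) * G s (x - b)
      = Real.exp (-(a - b) ^ 2 / (4 * s ^ 2)) *
          ((Real.pi * s ^ 2) ^ (-(1 / 2 : ℝ)) *
            Real.exp (-(s ^ 2)⁻¹ * (x - (a + b) / 2) ^ 2)) := by
  have hπ : 0 < Real.pi * s ^ 2 := by positivity
  unfold G
  rw [mul_mul_mul_comm, ← Real.rpow_add hπ, ← Real.exp_add]
  rw [show -(1/4 : ℝ) + -(1/4) = -(1/2) by norm_num]
  have hs2 : s ^ 2 ≠ 0 := by positivity
  have he : -(x - a) ^ 2 / (2 * s ^ 2) + -(x - b) ^ 2 / (2 * s ^ 2)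
      = -(a - b) ^ 2 / (4 * s ^ 2) + -(s ^ 2)⁻¹ * (x - (a + b) / 2) ^ 2 := by
    field_simp
    ring
  rw [he, Real.exp_add]
  ring

lemma G_mul_integrable (s a b : ℝ) (hs : 0 < s) :
    Integrable (fun x => G s (x - a) * G s (x - b)) := by
  have hb : (0:ℝ) < (s ^ 2)⁻¹ := by positivity
  simp only [G_mul_eq s a b hs]
  exact (((integrable_exp_neg_mul_sq hb).comp_sub_right ((a+b)/2)).const_mul _).const_mul _

lemma G_mul_integral (s a b : ℝ) (hs : 0 < s) :
    ∫ x : ℝ, G s (x - a) * G s (x - b) = Real.exp (-(a - b) ^ 2 / (4 * s ^ 2)) := by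
  have hπ : 0 < Real.pi * s ^ 2 := by positivity
  have hb : (0:ℝ) < (s ^ 2)⁻¹ := by positivity
  simp only [G_mul_eq s a b hs]
  rw [integral_const_mul, integral_const_mul]
  have h1 : ∫ x : ℝ, Real.exp (-(s ^ 2)⁻¹ * (x - (a + b) / 2) ^ 2)
      = Real.sqrt (Real.pi / (s ^ 2)⁻¹) := by
    rw [← integral_gaussian]
    exact integral_sub_right_eq_self (fun x => Real.exp (-(s ^ 2)⁻¹ * x ^ 2)) _
  rw [h1]
  have h2 : (Real.pi * s ^ 2) ^ (-(1/2 : ℝ)) * Real.sqrt (Real.pi / (s ^ 2)⁻¹) = 1 := by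
    rw [show Real.pi / (s ^ 2)⁻¹ = Real.pi * s ^ 2 by field_simp, Real.sqrt_eq_rpow,
      ← Real.rpow_add hπ]
    norm_num
  rw [h2, mul_one]

lemma Ns_expand {n : ℕ} (E P : Matrix (Fin n) (Fin n) ℂ) (hE : E.IsHermitian)
    (s x : ℝ) :
    (Ns E s x)ᴴ * P * Ns E s x
      = ((G s (x - 1) * G s (x - 1) : ℝ) : ℂ) • (E * P * E)
        + ((G s x * G s x : ℝ) : ℂ) • ((1 - E) * P * (1 - E))
        + ((G s (x - 1) * G s x : ℝ) : ℂ) • (E * P * (1 - E) + (1 - E) * P * E) := by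
  have hEH : Eᴴ = E := hE
  have h1 : (1 - E)ᴴ = 1 - E := by simp [conjTranspose_sub, hEH]
  unfold Ns
  rw [conjTranspose_add, conjTranspose_smul, conjTranspose_smul, hEH, h1]
  push_cast
  simp only [Complex.star_def, Complex.conj_ofReal]
  simp only [Matrix.add_mul, Matrix.mul_add, Matrix.smul_mul, Matrix.mul_smul,
    smul_add, smul_smul]
  module


/-- For orthogonal projections `E`, `P` and `s > 0`, the matrix-valued
integral `S^s = ∫ (N^s_x)† P N^s_x dx` (stated entrywise) equals
`E P E + Ẽ P Ẽ + e^{−1/(4s²)} (E P Ẽ + Ẽ P E)` where `Ẽ = I − E`. -/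
theorem gaussian_measurement_postselection_operator
    (n : ℕ) (E P : Matrix (Fin n) (Fin n) ℂ)
    (hE : E.IsHermitian) (hE2 : E * E = E)
    (hP : P.IsHermitian) (hP2 : P * P = P)
    (s : ℝ) (hs : 0 < s) :
    ∀ k l : Fin n,
      (∫ x : ℝ, ((Ns E s x)ᴴ * P * Ns E s x) k l)
        = (E * P * E + (1 - E) * P * (1 - E)
            + (Real.exp (-1 / (4 * s ^ 2)) : ℂ) • (E * P * (1 - E) + (1 - E) * P * E)) k l := by

  intro k l
  set A := E * P * E
  set B := (1 - E) * P * (1 - E)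
  set C := E * P * (1 - E) + (1 - E) * P * E with hC
  have hpt : ∀ x : ℝ, ((Ns E s x)ᴴ * P * Ns E s x) k l
      = ((G s (x - 1) * G s (x - 1) : ℝ) : ℂ) * A k l
        + ((G s x * G s x : ℝ) : ℂ) * B k l
        + ((G s (x - 1) * G s x : ℝ) : ℂ) * C k l := by
    intro x
    rw [Ns_expand E P hE s x]
    simp [Matrix.add_apply, Matrix.smul_apply, smul_eq_mul, mul_add]
    rw [hC, Matrix.add_apply, mul_add]
  have int1 : Integrable (fun x : ℝ => ((G s (x - 1) * G s (x - 1) : ℝ) : ℂ) * A k l) :=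
    ((G_mul_integrable s 1 1 hs).ofReal.mul_const _)
  have int2 : Integrable (fun x : ℝ => ((G s x * G s x : ℝ) : ℂ) * B k l) := by
    have := ((G_mul_integrable s 0 0 hs).ofReal.mul_const (B k l))
    simpa using this
  have int3 : Integrable (fun x : ℝ => ((G s (x - 1) * G s x : ℝ) : ℂ) * C k l) := by
    have := ((G_mul_integrable s 1 0 hs).ofReal.mul_const (C k l))
    simpa using this
  calc (∫ x : ℝ, ((Ns E s x)ᴴ * P * Ns E s x) k l)
      = ∫ x : ℝ, (((G s (x - 1) * G s (x - 1) : ℝ) : ℂ) * A k l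
          + ((G s x * G s x : ℝ) : ℂ) * B k l
          + ((G s (x - 1) * G s x : ℝ) : ℂ) * C k l) := by
        exact integral_congr_ae (Filter.Eventually.of_forall hpt)
    _ = (∫ x : ℝ, ((G s (x - 1) * G s (x - 1) : ℝ) : ℂ)) * A k l
          + (∫ x : ℝ, ((G s x * G s x : ℝ) : ℂ)) * B k l
          + (∫ x : ℝ, ((G s (x - 1) * G s x : ℝ) : ℂ)) * C k l := by
        have int12 : Integrable (fun x : ℝ => ((G s (x - 1) * G s (x - 1) : ℝ) : ℂ) * A k l
            + ((G s x * G s x : ℝ) : ℂ) * B k l) := int1.add int2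
        rw [integral_add int12 int3, integral_add int1 int2,
          integral_mul_const, integral_mul_const, integral_mul_const]
    _ = A k l + B k l + (Real.exp (-1 / (4 * s ^ 2)) : ℂ) * C k l := by
        have hre : ∀ f : ℝ → ℝ, (∫ x : ℝ, ((f x : ℝ) : ℂ)) = ((∫ x : ℝ, f x : ℝ) : ℂ) :=
          fun f => integral_ofReal
        rw [hre (fun x => G s (x - 1) * G s (x - 1)), hre (fun x => G s x * G s x),
          hre (fun x => G s (x - 1) * G s x)]
        have e1 : (∫ x : ℝ, G s (x - 1) * G s (x - 1)) = 1 := by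
          rw [G_mul_integral s 1 1 hs]; norm_num
        have e2 : (∫ x : ℝ, G s x * G s x) = 1 := by
          have := G_mul_integral s 0 0 hs
          simp only [sub_zero] at this
          rw [this]; norm_num
        have e3 : (∫ x : ℝ, G s (x - 1) * G s x) = Real.exp (-1 / (4 * s ^ 2)) := by
          have := G_mul_integral s 1 0 hs
          simp only [sub_zero] at this
          rw [this]; norm_num
        rw [e1, e2, e3]
        norm_num
    _ = (A + B + (Real.exp (-1 / (4 * s ^ 2)) : ℂ) • C) k l := by
        simp [Matrix.add_apply, Matrix.smul_apply, smul_eq_mul]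
end

section
/- Let ρ be a density matrix and E, Π orthogonal projections on ℂⁿ, with Ẽ = I − E and N^s_x = G_s(x−1)·E + G_s(x)·Ẽ for s > 0. Then the post-selected pointer-position expectation satisfies ∫_{−∞}^{+∞} x · tr((N^s_x)† Π N^s_x ρ) dx = tr(Π E ρ E) + e^{−1/(4s²)} · Re tr(Π E ρ Ẽ). -/
open MeasureTheory Matrix
open scoped ComplexOrder

/-! The product `G_s(x - a) G_s(x - b)` is `exp(-(a - b)²/(4s²))` times the density of the normal
law with mean `(a + b)/2` and variance `s²/2`, so `x G_s(x - a) G_s(x - b)` integrates to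
`exp(-(a - b)²/(4s²)) (a + b)/2`. Expanding `(N^s_x)† Π N^s_x` along the Hermitian operators
`E` and `Ẽ` leaves three such products, `(a, b) = (1, 1), (1, 0), (0, 0)`: the first gives
`tr(ΠEρE)`, the last nothing, and the middle one multiplies the cross terms
`tr(EΠẼρ) + tr(ẼΠEρ) = 2 Re tr(ΠEρẼ)` by `e^{-1/(4s²)}/2`. -/

open ProbabilityTheory
open scoped NNReal

lemma integrable_mul_gaussianPDFReal (μ : ℝ) {v : ℝ≥0} (hv : v ≠ 0) :
    Integrable fun x ↦ x * gaussianPDFReal μ v x := by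
  have h : Integrable id (gaussianReal μ v) := (memLp_id_gaussianReal 1).integrable le_rfl
  rw [gaussianReal_of_var_ne_zero _ hv, gaussianPDF_def, integrable_withDensity_iff_integrable_smul'
    (by fun_prop) (ae_of_all _ fun _ ↦ ENNReal.ofReal_lt_top)] at h
  refine h.congr (ae_of_all _ fun x ↦ ?_)
  simp [ENNReal.toReal_ofReal (gaussianPDFReal_nonneg μ v x), mul_comm]

lemma integral_mul_gaussianPDFReal (μ : ℝ) {v : ℝ≥0} (hv : v ≠ 0) :
    ∫ x, x * gaussianPDFReal μ v x = μ := by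
  simpa [integral_gaussianReal_eq_integral_smul hv, mul_comm] using
    (integral_id_gaussianReal (μ := μ) (v := v))

lemma G_sub_mul_G_sub {s : ℝ} (hs : s ≠ 0) (a b x : ℝ) :
    G s (x - a) * G s (x - b) = Real.exp (-(a - b) ^ 2 / (4 * s ^ 2)) *
      gaussianPDFReal ((a + b) / 2) (s ^ 2 / 2).toNNReal x := by
  have hπs : 0 < Real.pi * s ^ 2 := by positivity
  rw [G, G, gaussianPDFReal, Real.coe_toNNReal _ (by positivity), mul_mul_mul_comm,
    ← Real.rpow_add hπs, ← Real.exp_add, mul_left_comm, ← Real.exp_add]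
  congr 1
  · rw [show 2 * Real.pi * (s ^ 2 / 2) = Real.pi * s ^ 2 by ring, Real.sqrt_eq_rpow,
      ← Real.rpow_neg hπs.le]
    norm_num
  · congr 1
    field_simp
    ring

lemma integrable_mul_G_sub_mul_G_sub {s : ℝ} (hs : s ≠ 0) (a b : ℝ) :
    Integrable fun x ↦ x * (G s (x - a) * G s (x - b)) := by
  simp_rw [G_sub_mul_G_sub hs, mul_left_comm _ (Real.exp _)]
  exact (integrable_mul_gaussianPDFReal _ (by simp; positivity)).const_mul _

lemma integral_mul_G_sub_mul_G_sub {s : ℝ} (hs : s ≠ 0) (a b : ℝ) :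
    ∫ x, x * (G s (x - a) * G s (x - b)) =
      Real.exp (-(a - b) ^ 2 / (4 * s ^ 2)) * ((a + b) / 2) := by
  simp_rw [G_sub_mul_G_sub hs, mul_left_comm _ (Real.exp _)]
  rw [integral_const_mul, integral_mul_gaussianPDFReal _ (by simp; positivity)]

section Trace

variable {m : Type*} [Fintype m]

lemma trace_smul_add_smul_sandwich {A B : Matrix m m ℂ} (hA : A.IsHermitian)
    (hB : B.IsHermitian) (a b : ℝ) (P ρ : Matrix m m ℂ) :
    trace (((a : ℂ) • A + (b : ℂ) • B)ᴴ * P * ((a : ℂ) • A + (b : ℂ) • B) * ρ) =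
      ((a * a : ℝ) : ℂ) * trace (A * P * A * ρ)
        + ((a * b : ℝ) : ℂ) * (trace (A * P * B * ρ) + trace (B * P * A * ρ))
        + ((b * b : ℝ) : ℂ) * trace (B * P * B * ρ) := by
  simp only [conjTranspose_add, conjTranspose_smul, hA.eq, hB.eq, Complex.star_def,
    Complex.conj_ofReal, add_mul, mul_add, smul_mul_assoc, Matrix.mul_smul, trace_add,
    trace_smul, smul_eq_mul]
  push_cast
  ring

lemma trace_cross_terms_eq_two_re {A B P ρ : Matrix m m ℂ} (hA : A.IsHermitian)
    (hB : B.IsHermitian) (hP : P.IsHermitian) (hρ : ρ.IsHermitian) :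
    trace (A * P * B * ρ) + trace (B * P * A * ρ) =
      ((2 * (trace (P * A * ρ * B)).re : ℝ) : ℂ) := by
  have h_swap : trace (B * P * A * ρ) = trace (P * A * ρ * B) := by
    rw [show B * P * A * ρ = B * (P * A * ρ) by simp only [Matrix.mul_assoc], trace_mul_comm]
  have h_conj : trace (A * P * B * ρ) = star (trace (P * A * ρ * B)) := by
    rw [← trace_conjTranspose]
    simp only [conjTranspose_mul, hA.eq, hB.eq, hP.eq, hρ.eq]
    rw [trace_mul_comm B, Matrix.mul_assoc ρ, trace_mul_comm ρ]
  rw [h_swap, h_conj, Complex.star_def, add_comm, Complex.add_conj]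

end Trace

theorem postselected_pointer_expectation_general
    (n : ℕ) (ρ E P : Matrix (Fin n) (Fin n) ℂ)
    (hρ : ρ.PosSemidef)
    (hE : E.IsHermitian)
    (hP : P.IsHermitian)
    (s : ℝ) (hs : 0 < s) :
    (∫ x : ℝ, (x : ℂ) * Matrix.trace ((Ns E s x)ᴴ * P * Ns E s x * ρ))
      = Matrix.trace (P * E * ρ * E)
        + (Real.exp (-1 / (4 * s ^ 2)) * (Matrix.trace (P * E * ρ * (1 - E))).re : ℝ) := by
  set z := trace (P * E * ρ * (1 - E))
  have hF : (1 - E).IsHermitian := isHermitian_one.sub hE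
  have h_diag : trace (E * P * E * ρ) = trace (P * E * ρ * E) := by
    rw [show E * P * E * ρ = E * (P * E * ρ) by simp only [Matrix.mul_assoc], trace_mul_comm]
  -- `G s x` is written `G s (x - 0)` to match `integral_mul_G_sub_mul_G_sub`.
  have h_integrand : ∀ x : ℝ, (x : ℂ) * trace ((Ns E s x)ᴴ * P * Ns E s x * ρ) =
      ((x * (G s (x - 1) * G s (x - 1)) : ℝ) : ℂ) * trace (P * E * ρ * E)
        + ((x * (G s (x - 1) * G s (x - 0)) : ℝ) : ℂ) * ((2 * z.re : ℝ) : ℂ)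
        + ((x * (G s (x - 0) * G s (x - 0)) : ℝ) : ℂ) * trace ((1 - E) * P * (1 - E) * ρ) := by
    intro x
    rw [Ns, trace_smul_add_smul_sandwich hE hF, trace_cross_terms_eq_two_re hE hF hP hρ.1,
      sub_zero, h_diag]
    push_cast
    ring
  have h_int (a b : ℝ) (c : ℂ) :
      Integrable fun x : ℝ ↦ ((x * (G s (x - a) * G s (x - b)) : ℝ) : ℂ) * c :=
    (integrable_mul_G_sub_mul_G_sub hs.ne' a b).ofReal.mul_const c
  simp_rw [h_integrand]
  rw [integral_add ((h_int 1 1 _).fun_add (h_int 1 0 _)) (h_int 0 0 _),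
    integral_add (h_int 1 1 _) (h_int 1 0 _)]
  simp_rw [integral_mul_const, integral_complex_ofReal, integral_mul_G_sub_mul_G_sub hs.ne']
  norm_num
  ring

/-- For a density matrix `ρ`, orthogonal projections `E`, `P` and `s > 0`,
the post-selected pointer-position expectation satisfies
`∫ x · tr((N^s_x)† P N^s_x ρ) dx = tr(P E ρ E) + e^{−1/(4s²)} · Re tr(P E ρ Ẽ)`,
with `Ẽ = I − E`. -/
theorem postselected_pointer_expectation
    (n : ℕ) (ρ E P : Matrix (Fin n) (Fin n) ℂ)
    (hρ : ρ.PosSemidef) (hρtr : ρ.trace = 1)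
    (hE : E.IsHermitian) (hE2 : E * E = E)
    (hP : P.IsHermitian) (hP2 : P * P = P)
    (s : ℝ) (hs : 0 < s) :
    (∫ x : ℝ, (x : ℂ) * Matrix.trace ((Ns E s x)ᴴ * P * Ns E s x * ρ))
      = Matrix.trace (P * E * ρ * E)
        + (Real.exp (-1 / (4 * s ^ 2)) * (Matrix.trace (P * E * ρ * (1 - E))).re : ℝ) :=
  postselected_pointer_expectation_general n ρ E P hρ hE hP s hs
end

section
/- Let ρ be a density matrix and E, Π orthogonal projections on ℂⁿ, with Ẽ = I − E and N^s_x = G_s(x−1)·E + G_s(x)·Ẽ for s > 0. Then the total post-selection probability satisfies ∫_{−∞}^{+∞} tr((N^s_x)† Π N^s_x ρ) dx = tr(Π ρ) − 2(1 − e^{−1/(4s²)}) · Re tr(Π E ρ Ẽ). -/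
open MeasureTheory Matrix
open scoped ComplexOrder

lemma G_mul {s : ℝ} (hs : 0 < s) (x y : ℝ) :
    G s x * G s y
      = (Real.pi * s ^ 2) ^ (-(1 / 2 : ℝ)) * Real.exp ((-x ^ 2 - y ^ 2) / (2 * s ^ 2)) := by
  have ha : 0 < Real.pi * s ^ 2 := by positivity
  unfold G
  rw [show (Real.pi*s^2) ^ (-(1/4:ℝ)) * Real.exp (-x^2/(2*s^2)) *
      ((Real.pi*s^2) ^ (-(1/4:ℝ)) * Real.exp (-y^2/(2*s^2)))
      = ((Real.pi*s^2) ^ (-(1/4:ℝ)) * (Real.pi*s^2) ^ (-(1/4:ℝ)))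
        * (Real.exp (-x^2/(2*s^2)) * Real.exp (-y^2/(2*s^2))) by ring,
    ← Real.rpow_add ha, ← Real.exp_add]
  congr 1
  · norm_num
  · ring

lemma G_sq_eq {s : ℝ} (hs : 0 < s) :
    (fun x : ℝ => G s x * G s x)
      = fun x => (Real.pi * s ^ 2) ^ (-(1 / 2 : ℝ)) * Real.exp (-(1/s^2) * x ^ 2) := by
  funext x
  rw [G_mul hs]
  congr 1
  field_simp
  ring

lemma aux_const {s : ℝ} (hs : 0 < s) :
    (Real.pi * s ^ 2) ^ (-(1 / 2 : ℝ)) * Real.sqrt (Real.pi / (1/s^2)) = 1 := by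
  have ha : 0 < Real.pi * s ^ 2 := by positivity
  rw [show Real.pi / (1/s^2) = Real.pi * s ^ 2 by field_simp,
    Real.sqrt_eq_rpow, ← Real.rpow_add ha]
  norm_num

lemma integrable_G_sq {s : ℝ} (hs : 0 < s) :
    Integrable (fun x : ℝ => G s x * G s x) := by
  rw [G_sq_eq hs]
  exact (integrable_exp_neg_mul_sq (by positivity)).const_mul _

lemma integral_G_sq {s : ℝ} (hs : 0 < s) : ∫ x : ℝ, G s x * G s x = 1 := by
  rw [G_sq_eq hs]
  rw [MeasureTheory.integral_const_mul _ _, integral_gaussian]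
  exact aux_const hs

lemma integrable_G_sq_shift {s : ℝ} (hs : 0 < s) :
    Integrable (fun x : ℝ => G s (x - 1) * G s (x - 1)) :=
  (integrable_G_sq hs).comp_sub_right 1

lemma integral_G_sq_shift {s : ℝ} (hs : 0 < s) :
    ∫ x : ℝ, G s (x - 1) * G s (x - 1) = 1 := by
  rw [integral_sub_right_eq_self (fun x => G s x * G s x) 1]
  exact integral_G_sq hs

lemma G_cross_eq {s : ℝ} (hs : 0 < s) :
    (fun x : ℝ => G s (x - 1) * G s x)
      = fun x => Real.exp (-1/(4*s^2)) *
          ((Real.pi * s ^ 2) ^ (-(1 / 2 : ℝ)) * Real.exp (-(1/s^2) * (x - 1/2) ^ 2)) := by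
  funext x
  rw [G_mul hs, show Real.exp (-1/(4*s^2)) *
      ((Real.pi * s ^ 2) ^ (-(1 / 2 : ℝ)) * Real.exp (-(1/s^2) * (x - 1/2) ^ 2))
      = (Real.pi * s ^ 2) ^ (-(1 / 2 : ℝ)) *
        (Real.exp (-1/(4*s^2)) * Real.exp (-(1/s^2) * (x - 1/2) ^ 2)) by ring,
    ← Real.exp_add]
  congr 1
  field_simp
  ring

lemma integrable_G_cross {s : ℝ} (hs : 0 < s) :
    Integrable (fun x : ℝ => G s (x - 1) * G s x) := by
  rw [G_cross_eq hs]
  exact (((integrable_exp_neg_mul_sq (show (0:ℝ) < 1/s^2 by positivity)).const_mul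
    _).comp_sub_right (1/2)).const_mul _

lemma integral_G_cross {s : ℝ} (hs : 0 < s) :
    ∫ x : ℝ, G s (x - 1) * G s x = Real.exp (-1/(4*s^2)) := by
  rw [G_cross_eq hs]
  rw [MeasureTheory.integral_const_mul _ _]
  have : ∫ x : ℝ, (Real.pi * s ^ 2) ^ (-(1 / 2 : ℝ)) * Real.exp (-(1/s^2) * (x - 1/2) ^ 2)
      = 1 := by
    rw [integral_sub_right_eq_self
      (fun x => (Real.pi * s ^ 2) ^ (-(1 / 2 : ℝ)) * Real.exp (-(1/s^2) * x ^ 2)) (1/2),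
      MeasureTheory.integral_const_mul _ _, integral_gaussian]
    exact aux_const hs
  rw [this, mul_one]

lemma trace_expand {n : ℕ} (ρ E P : Matrix (Fin n) (Fin n) ℂ)
    (hρ : ρᴴ = ρ) (hE : Eᴴ = E) (hP : Pᴴ = P) (a b : ℝ) :
    Matrix.trace ((((a:ℂ) • E + (b:ℂ) • (1 - E))ᴴ * P * ((a:ℂ) • E + (b:ℂ) • (1 - E))) * ρ)
      = ((a*a : ℝ) : ℂ) * Matrix.trace (E * P * E * ρ)
        + ((a*b : ℝ) : ℂ) * (Matrix.trace (E * P * (1 - E) * ρ)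
            + Matrix.trace ((1 - E) * P * E * ρ))
        + ((b*b : ℝ) : ℂ) * Matrix.trace ((1 - E) * P * (1 - E) * ρ) := by
  simp only [conjTranspose_add, conjTranspose_smul, conjTranspose_sub, conjTranspose_one,
    hE, RCLike.star_def, Complex.conj_ofReal, add_mul, mul_add, Matrix.smul_mul,
    Matrix.mul_smul, Matrix.trace_add, Matrix.trace_smul, smul_smul, smul_eq_mul]
  push_cast
  ring

/-- For a density matrix `ρ`, orthogonal projections `E`, `P` and `s > 0`,
the total post-selection probability satisfies
`∫ tr((N^s_x)† P N^s_x ρ) dx = tr(P ρ) − 2(1 − e^{−1/(4s²)}) · Re tr(P E ρ Ẽ)`,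
with `Ẽ = I − E`. -/
theorem postselection_probability
    (n : ℕ) (ρ E P : Matrix (Fin n) (Fin n) ℂ)
    (hρ : ρ.PosSemidef) (hρtr : ρ.trace = 1)
    (hE : E.IsHermitian) (hE2 : E * E = E)
    (hP : P.IsHermitian) (hP2 : P * P = P)
    (s : ℝ) (hs : 0 < s) :
    (∫ x : ℝ, Matrix.trace ((Ns E s x)ᴴ * P * Ns E s x * ρ))
      = Matrix.trace (P * ρ)
        - (2 * (1 - Real.exp (-1 / (4 * s ^ 2)))
            * (Matrix.trace (P * E * ρ * (1 - E))).re : ℝ) := by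
  have hρ' : ρᴴ = ρ := hρ.1
  have hE' : Eᴴ = E := hE
  have hP' : Pᴴ = P := hP
  set c11 := Matrix.trace (E * P * E * ρ) with hc11
  set c12 := Matrix.trace (E * P * (1 - E) * ρ) with hc12
  set c21 := Matrix.trace ((1 - E) * P * E * ρ) with hc21
  set c22 := Matrix.trace ((1 - E) * P * (1 - E) * ρ) with hc22
  have key : ∀ x : ℝ, Matrix.trace ((Ns E s x)ᴴ * P * Ns E s x * ρ)
      = ((G s (x-1) * G s (x-1) : ℝ) : ℂ) * c11
        + ((G s (x-1) * G s x : ℝ) : ℂ) * (c12 + c21)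
        + ((G s x * G s x : ℝ) : ℂ) * c22 := fun x =>
    trace_expand ρ E P hρ' hE' hP' (G s (x-1)) (G s x)
  simp only [key]
  have hA := integrable_G_sq_shift hs
  have hB := integrable_G_cross hs
  have hC := integrable_G_sq hs
  have hA' : Integrable fun x : ℝ => ((G s (x-1) * G s (x-1) : ℝ) : ℂ) * c11 :=
    hA.ofReal.mul_const _
  have hB' : Integrable fun x : ℝ => ((G s (x-1) * G s x : ℝ) : ℂ) * (c12 + c21) :=
    hB.ofReal.mul_const _
  have hC' : Integrable fun x : ℝ => ((G s x * G s x : ℝ) : ℂ) * c22 :=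
    hC.ofReal.mul_const _
  have hAB' : Integrable (fun x : ℝ => ((G s (x-1) * G s (x-1) : ℝ) : ℂ) * c11
      + ((G s (x-1) * G s x : ℝ) : ℂ) * (c12 + c21)) := hA'.add hB'
  rw [integral_add hAB' hC', integral_add hA' hB',
    integral_mul_const, integral_mul_const, integral_mul_const,
    show (∫ a : ℝ, ((G s (a-1) * G s (a-1) : ℝ) : ℂ)) = ((∫ a : ℝ, G s (a-1) * G s (a-1) : ℝ) : ℂ)
      from integral_ofReal,
    show (∫ a : ℝ, ((G s (a-1) * G s a : ℝ) : ℂ)) = ((∫ a : ℝ, G s (a-1) * G s a : ℝ) : ℂ)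
      from integral_ofReal,
    show (∫ a : ℝ, ((G s a * G s a : ℝ) : ℂ)) = ((∫ a : ℝ, G s a * G s a : ℝ) : ℂ)
      from integral_ofReal,
    integral_G_sq_shift hs, integral_G_cross hs, integral_G_sq hs]
  -- algebra
  set z := Matrix.trace (P * E * ρ * (1 - E)) with hz
  have hsum : c11 + c12 + c21 + c22 = Matrix.trace (P * ρ) := by
    rw [hc11, hc12, hc21, hc22, ← Matrix.trace_add, ← Matrix.trace_add, ← Matrix.trace_add]
    congr 1
    noncomm_ring
  have h21 : c21 = z := by
    rw [hc21, hz, show (1 - E) * P * E * ρ = (1 - E) * (P * E * ρ) by noncomm_ring,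
      Matrix.trace_mul_comm]
  have h12 : c12 = star z := by
    rw [hz, ← Matrix.trace_conjTranspose, hc12]
    have : (P * E * ρ * (1 - E))ᴴ = (1 - E) * (ρ * (E * P)) := by
      simp [conjTranspose_mul, conjTranspose_sub, conjTranspose_one, hρ', hE', hP', mul_assoc]
    rw [this, show E * P * (1 - E) * ρ = (E * P * (1 - E)) * ρ from rfl,
      Matrix.trace_mul_comm (E * P * (1 - E)) ρ,
      show ρ * (E * P * (1 - E)) = (ρ * (E * P)) * (1 - E) by noncomm_ring,
      Matrix.trace_mul_comm]
  have hadd : z + star z = ((2 * z.re : ℝ) : ℂ) := Complex.add_conj z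
  push_cast at hadd ⊢
  linear_combination hsum + (Complex.exp (-1/(4*(s:ℂ)^2)) - 1) * (h12 + h21 + hadd)
end

section
/- Allahverdyan's fluctuation equality for the weak-measurement work quasi-probability: let H₀ and H₁ be Hermitian n×n matrices with orthonormal eigenbases {|i⟩}ᵢ and {|j⟩}ⱼ and eigenvalues {Eᵢ} and {E'ⱼ}, let U be unitary, β ∈ ℝ, and let ρ be any density matrix. With Z₀ = tr(e^{−βH₀}), Z₁ = tr(e^{−βH₁}), γ₀ = e^{−βH₀}/Z₀ and γ₁ = e^{−βH₁}/Z₁, one has Σ_{i,j} e^{−β(E'ⱼ − Eᵢ)} · Re tr(ρ |i⟩⟨i| U† |j⟩⟨j| U) = (Z₁/Z₀) · Re tr(U† γ₁ U γ₀^{−1} ρ). In particular, if ρ = γ₀ the right-hand side equals Z₁/Z₀ ( = e^{−βΔF}). -/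
/-!
Expanding `e^{βH₀}` and `e^{−βH₁}` in the eigenbases turns the weighted double sum into the single
trace `Re tr(ρ e^{βH₀} U† e^{−βH₁} U)`. On the right-hand side `γ₀⁻¹ = Z₀ e^{βH₀}` and
`γ₁ = e^{−βH₁}/Z₁`; since `ρ`, `e^{βH₀}` and `U† e^{−βH₁} U` are Hermitian, taking the conjugate
transpose reverses the order of the product without changing the real part of its trace. For
`ρ = γ₀` the trace collapses, by cyclicity and `U U† = 1`, to `tr γ₁ = 1`.
-/

open Matrix
open scoped ComplexOrder

/-- The rank-one outer product `|v⟩⟨v|`. -/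
def outer {n : ℕ} (v : Fin n → ℂ) : Matrix (Fin n) (Fin n) ℂ :=
  Matrix.vecMulVec v (star v)

section Spectral

-- `(of v)ᵀ` is the matrix with columns `v i`, unitary when the `v i` are orthonormal.
variable {n : ℕ} {v : Fin n → Fin n → ℂ}

lemma conjTranspose_mul_self_of_orthonormal
    (hv : ∀ k l, star (v k) ⬝ᵥ v l = if k = l then 1 else 0) :
    (of v)ᵀᴴ * (of v)ᵀ = 1 := by
  ext k l
  simpa [mul_apply, dotProduct, one_apply] using hv k l

lemma mul_diagonal_mul_conjTranspose_eq_sum_outer (d : Fin n → ℂ) :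
    (of v)ᵀ * diagonal d * (of v)ᵀᴴ = ∑ i, d i • outer (v i) := by
  ext k l
  simp only [mul_apply, transpose_apply, of_apply, diagonal_apply, mul_ite, mul_zero,
    Finset.sum_ite_eq', Finset.mem_univ, ↓reduceIte, conjTranspose_apply, RCLike.star_def, outer,
    Matrix.sum_apply, Matrix.smul_apply, vecMulVec_apply, Pi.star_apply, smul_eq_mul]
  exact Finset.sum_congr rfl fun i _ => by ring

lemma eq_mul_diagonal_mul_conjTranspose {H : Matrix (Fin n) (Fin n) ℂ} {E : Fin n → ℝ}
    (hv : ∀ k l, star (v k) ⬝ᵥ v l = if k = l then 1 else 0)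
    (hvE : ∀ i, H *ᵥ v i = (E i : ℂ) • v i) :
    H = (of v)ᵀ * diagonal (fun i => (E i : ℂ)) * (of v)ᵀᴴ := by
  have hHV : H * (of v)ᵀ = (of v)ᵀ * diagonal (fun i => (E i : ℂ)) := by
    ext k i
    simpa [mul_apply, mulVec, dotProduct, diagonal_apply, mul_comm] using congrFun (hvE i) k
  rw [← hHV, Matrix.mul_assoc, mul_eq_one_comm.mp (conjTranspose_mul_self_of_orthonormal hv),
    Matrix.mul_one]

lemma exp_smul_eq_sum_smul_outer {H : Matrix (Fin n) (Fin n) ℂ} {E : Fin n → ℝ}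
    (hv : ∀ k l, star (v k) ⬝ᵥ v l = if k = l then 1 else 0)
    (hvE : ∀ i, H *ᵥ v i = (E i : ℂ) • v i) (c : ℝ) :
    NormedSpace.exp ((c : ℂ) • H) = ∑ i, (Real.exp (c * E i) : ℂ) • outer (v i) := by
  have hVl := conjTranspose_mul_self_of_orthonormal hv
  have hinv : ((of v)ᵀ)⁻¹ = (of v)ᵀᴴ := inv_eq_left_inv hVl
  have hunit : IsUnit (of v)ᵀ := (isUnit_iff_isUnit_det _).mpr (isUnit_det_of_left_inverse hVl)
  rw [eq_mul_diagonal_mul_conjTranspose hv hvE, ← hinv, ← Matrix.smul_mul, ← Matrix.mul_smul,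
    ← diagonal_smul, exp_conj _ _ hunit, exp_diagonal, hinv,
    mul_diagonal_mul_conjTranspose_eq_sum_outer]
  congr 1 with i
  simp [Pi.coe_exp, ← Complex.exp_eq_exp_ℂ]

end Spectral

lemma trace_outer {n : ℕ} (x : Fin n → ℂ) : (outer x).trace = star x ⬝ᵥ x := by
  simp [trace, outer, vecMulVec_apply, dotProduct, mul_comm]

section MatrixAlgebra

variable {m : Type*} [Fintype m]

lemma re_trace_mul_mul_of_isHermitian {A B C : Matrix m m ℂ} (hA : A.IsHermitian)
    (hB : B.IsHermitian) (hC : C.IsHermitian) :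
    (A * B * C).trace.re = (C * B * A).trace.re := by
  rw [← hA.eq, ← hB.eq, ← hC.eq, ← conjTranspose_mul, ← conjTranspose_mul, trace_conjTranspose,
    hA.eq, hB.eq, hC.eq, Matrix.mul_assoc, Complex.star_def, Complex.conj_re]

lemma trace_mul_sum_smul_mul_mul_sum_smul_mul {R ι κ : Type*} [CommSemiring R] [Fintype ι]
    [Fintype κ] (A X Y : Matrix m m R) (a : ι → R) (P : ι → Matrix m m R) (b : κ → R)
    (Q : κ → Matrix m m R) :
    (A * (∑ i, a i • P i) * X * (∑ j, b j • Q j) * Y).trace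
      = ∑ i, ∑ j, a i * b j * (A * P i * X * Q j * Y).trace := by
  simp only [Matrix.sum_mul, Matrix.mul_smul, Matrix.smul_mul, trace_sum, trace_smul, smul_eq_mul,
    Finset.mul_sum]
  rw [Finset.sum_comm]
  exact Finset.sum_congr rfl fun i _ => Finset.sum_congr rfl fun j _ => by ring

variable [DecidableEq m]

lemma trace_conjTranspose_mul_mul_mul_inv_mul_self {U A : Matrix m m ℂ} (hU : Uᴴ * U = 1)
    (hA : IsUnit A.det) (B : Matrix m m ℂ) : (Uᴴ * B * U * A⁻¹ * A).trace = B.trace := by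
  rw [Matrix.mul_assoc _ A⁻¹, nonsing_inv_mul _ hA, Matrix.mul_one, trace_mul_cycle,
    mul_eq_one_comm.mp hU, Matrix.one_mul]

end MatrixAlgebra

section Gibbs

variable {m : Type*} [Fintype m] [DecidableEq m]

noncomputable def partitionFunction (β : ℝ) (H : Matrix m m ℂ) : ℝ :=
  (trace (NormedSpace.exp ((-β : ℂ) • H))).re

noncomputable def gibbsState (β : ℝ) (H : Matrix m m ℂ) : Matrix m m ℂ :=
  ((partitionFunction β H : ℂ))⁻¹ • NormedSpace.exp ((-β : ℂ) • H)

lemma smul_exp_mul_gibbsState {β : ℝ} {H : Matrix m m ℂ} (hZ : partitionFunction β H ≠ 0) :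
    (partitionFunction β H : ℂ) • NormedSpace.exp ((β : ℂ) • H) * gibbsState β H = 1 := by
  rw [gibbsState, neg_smul, smul_mul_smul_comm, mul_inv_cancel₀ (by exact_mod_cast hZ), one_smul,
    ← exp_add_of_commute _ _ (Commute.refl ((β : ℂ) • H)).neg_right, add_neg_cancel,
    NormedSpace.exp_zero]

lemma re_trace_conj_gibbsState_mul_inv_mul {H₀ H₁ ρ : Matrix m m ℂ} (hH₀ : H₀.IsHermitian)
    (hH₁ : H₁.IsHermitian) (hρ : ρ.IsHermitian) (U : Matrix m m ℂ) {β : ℝ}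
    (hZ₀ : partitionFunction β H₀ ≠ 0) :
    (Uᴴ * gibbsState β H₁ * U * (gibbsState β H₀)⁻¹ * ρ).trace.re
      = partitionFunction β H₀ / partitionFunction β H₁
        * (ρ * NormedSpace.exp ((β : ℂ) • H₀) * Uᴴ
            * NormedSpace.exp ((-β : ℂ) • H₁) * U).trace.re := by
  have hS := (hH₀.smul (Complex.conj_ofReal β)).exp
  have hT := isHermitian_conjTranspose_mul_mul U
    (hH₁.smul (IsSelfAdjoint.neg (Complex.conj_ofReal β))).exp
  rw [inv_eq_left_inv (smul_exp_mul_gibbsState hZ₀), gibbsState]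
  simp only [Matrix.mul_smul, Matrix.smul_mul, smul_smul, trace_smul, smul_eq_mul]
  rw [← Complex.ofReal_inv, ← Complex.ofReal_mul, Complex.re_ofReal_mul,
    re_trace_mul_mul_of_isHermitian hT hS hρ]
  simp only [Matrix.mul_assoc, div_eq_inv_mul, mul_comm]

end Gibbs

section Eigenbasis

variable {n : ℕ} {H : Matrix (Fin n) (Fin n) ℂ} {v : Fin n → Fin n → ℂ} {E : Fin n → ℝ}

lemma trace_exp_smul_eq_sum (hv : ∀ k l, star (v k) ⬝ᵥ v l = if k = l then 1 else 0)
    (hvE : ∀ i, H *ᵥ v i = (E i : ℂ) • v i) (c : ℝ) :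
    (NormedSpace.exp ((c : ℂ) • H)).trace = ((∑ i, Real.exp (c * E i) : ℝ) : ℂ) := by
  rw [exp_smul_eq_sum_smul_outer hv hvE, trace_sum]
  simp [trace_outer, hv]

lemma ofReal_partitionFunction (hv : ∀ k l, star (v k) ⬝ᵥ v l = if k = l then 1 else 0)
    (hvE : ∀ i, H *ᵥ v i = (E i : ℂ) • v i) (β : ℝ) :
    (partitionFunction β H : ℂ) = (NormedSpace.exp ((-β : ℂ) • H)).trace := by
  rw [partitionFunction, ← Complex.ofReal_neg, trace_exp_smul_eq_sum hv hvE, Complex.ofReal_re]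

lemma partitionFunction_pos [Nonempty (Fin n)]
    (hv : ∀ k l, star (v k) ⬝ᵥ v l = if k = l then 1 else 0)
    (hvE : ∀ i, H *ᵥ v i = (E i : ℂ) • v i) (β : ℝ) : 0 < partitionFunction β H := by
  rw [partitionFunction, ← Complex.ofReal_neg, trace_exp_smul_eq_sum hv hvE, Complex.ofReal_re]
  positivity

lemma trace_gibbsState [Nonempty (Fin n)]
    (hv : ∀ k l, star (v k) ⬝ᵥ v l = if k = l then 1 else 0)
    (hvE : ∀ i, H *ᵥ v i = (E i : ℂ) • v i) (β : ℝ) : (gibbsState β H).trace = 1 := by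
  rw [gibbsState, trace_smul, ← ofReal_partitionFunction hv hvE, smul_eq_mul,
    inv_mul_cancel₀ (by exact_mod_cast (partitionFunction_pos hv hvE β).ne')]

end Eigenbasis

lemma sum_exp_mul_re_trace_outer_eq {n : ℕ} {H₀ H₁ : Matrix (Fin n) (Fin n) ℂ}
    {v w : Fin n → Fin n → ℂ} {E E' : Fin n → ℝ}
    (hv : ∀ k l, star (v k) ⬝ᵥ v l = if k = l then 1 else 0)
    (hw : ∀ k l, star (w k) ⬝ᵥ w l = if k = l then 1 else 0)
    (hvE : ∀ i, H₀ *ᵥ v i = (E i : ℂ) • v i) (hwE : ∀ j, H₁ *ᵥ w j = (E' j : ℂ) • w j)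
    (ρ U : Matrix (Fin n) (Fin n) ℂ) (β : ℝ) :
    ∑ i, ∑ j, Real.exp (-β * (E' j - E i)) * (ρ * outer (v i) * Uᴴ * outer (w j) * U).trace.re
      = (ρ * NormedSpace.exp ((β : ℂ) • H₀) * Uᴴ
          * NormedSpace.exp ((-β : ℂ) • H₁) * U).trace.re := by
  rw [exp_smul_eq_sum_smul_outer hv hvE, ← Complex.ofReal_neg, exp_smul_eq_sum_smul_outer hw hwE,
    trace_mul_sum_smul_mul_mul_sum_smul_mul, Complex.re_sum]
  refine Finset.sum_congr rfl fun i _ => ?_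
  rw [Complex.re_sum]
  refine Finset.sum_congr rfl fun j _ => ?_
  rw [← Complex.ofReal_mul, Complex.re_ofReal_mul, ← Real.exp_add]
  ring_nf

theorem allahverdyan_fluctuation_equality_general
    (n : ℕ) (H₀ H₁ U ρ : Matrix (Fin n) (Fin n) ℂ)
    (hH₀ : H₀.IsHermitian) (hH₁ : H₁.IsHermitian)
    (hU : Uᴴ * U = 1)
    (hρ : ρ.PosSemidef)
    (v w : Fin n → (Fin n → ℂ)) (E E' : Fin n → ℝ)
    (hv : ∀ k l, star (v k) ⬝ᵥ v l = if k = l then 1 else 0)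
    (hw : ∀ k l, star (w k) ⬝ᵥ w l = if k = l then 1 else 0)
    (hvE : ∀ i, H₀ *ᵥ v i = (E i : ℂ) • v i)
    (hwE : ∀ j, H₁ *ᵥ w j = (E' j : ℂ) • w j)
    (β : ℝ)
    (Z₀ Z₁ : ℝ) (γ₀ γ₁ : Matrix (Fin n) (Fin n) ℂ)
    (hZ₀ : Z₀ = (Matrix.trace (NormedSpace.exp ((-β : ℂ) • H₀))).re)
    (hZ₁ : Z₁ = (Matrix.trace (NormedSpace.exp ((-β : ℂ) • H₁))).re)
    (hγ₀ : γ₀ = ((Z₀ : ℂ))⁻¹ • NormedSpace.exp ((-β : ℂ) • H₀))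
    (hγ₁ : γ₁ = ((Z₁ : ℂ))⁻¹ • NormedSpace.exp ((-β : ℂ) • H₁)) :
    (∑ i, ∑ j,
        Real.exp (-β * (E' j - E i))
          * (Matrix.trace (ρ * outer (v i) * Uᴴ * outer (w j) * U)).re)
      = (Z₁ / Z₀) * (Matrix.trace (Uᴴ * γ₁ * U * γ₀⁻¹ * ρ)).re
    ∧ (ρ = γ₀ →
        (Z₁ / Z₀) * (Matrix.trace (Uᴴ * γ₁ * U * γ₀⁻¹ * ρ)).re = Z₁ / Z₀) := by
  rcases isEmpty_or_nonempty (Fin n) with hn | hn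
  · simp [trace, hZ₁]
  change Z₀ = partitionFunction β H₀ at hZ₀
  change Z₁ = partitionFunction β H₁ at hZ₁
  have hZ₀pos := hZ₀ ▸ partitionFunction_pos hv hvE β
  have hZ₁pos := hZ₁ ▸ partitionFunction_pos hw hwE β
  obtain rfl : γ₀ = gibbsState β H₀ := by rw [hγ₀, hZ₀, gibbsState]
  obtain rfl : γ₁ = gibbsState β H₁ := by rw [hγ₁, hZ₁, gibbsState]
  subst hZ₀ hZ₁
  refine ⟨?_, fun hργ => ?_⟩
  · rw [sum_exp_mul_re_trace_outer_eq hv hw hvE hwE,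
      re_trace_conj_gibbsState_mul_inv_mul hH₀ hH₁ hρ.isHermitian U hZ₀pos.ne']
    field_simp
  · have hγ₀unit := isUnit_det_of_left_inverse (smul_exp_mul_gibbsState hZ₀pos.ne')
    rw [hργ, trace_conjTranspose_mul_mul_mul_inv_mul_self hU hγ₀unit, trace_gibbsState hw hwE,
      Complex.one_re, mul_one]

/-- Allahverdyan's fluctuation equality for the weak-measurement work
quasi-probability. Let `H₀`, `H₁` be Hermitian with orthonormal eigenbases `v`, `w` and
eigenvalues `E`, `E'`, `U` unitary, `β ∈ ℝ`, and `ρ` any density matrix. With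
`Z₀ = tr(e^{−βH₀})`, `Z₁ = tr(e^{−βH₁})`, `γ₀ = e^{−βH₀}/Z₀`, `γ₁ = e^{−βH₁}/Z₁`,
one has `Σ_{i,j} e^{−β(E'ⱼ−Eᵢ)} · Re tr(ρ |i⟩⟨i| U† |j⟩⟨j| U)
= (Z₁/Z₀) · Re tr(U† γ₁ U γ₀⁻¹ ρ)`; and if `ρ = γ₀` the right-hand side equals `Z₁/Z₀`. -/
theorem allahverdyan_fluctuation_equality
    (n : ℕ) (H₀ H₁ U ρ : Matrix (Fin n) (Fin n) ℂ)
    (hH₀ : H₀.IsHermitian) (hH₁ : H₁.IsHermitian)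
    (hU : Uᴴ * U = 1)
    (hρ : ρ.PosSemidef) (hρtr : ρ.trace = 1)
    (v w : Fin n → (Fin n → ℂ)) (E E' : Fin n → ℝ)
    (hv : ∀ k l, star (v k) ⬝ᵥ v l = if k = l then 1 else 0)
    (hw : ∀ k l, star (w k) ⬝ᵥ w l = if k = l then 1 else 0)
    (hvE : ∀ i, H₀ *ᵥ v i = (E i : ℂ) • v i)
    (hwE : ∀ j, H₁ *ᵥ w j = (E' j : ℂ) • w j)
    (β : ℝ)
    (Z₀ Z₁ : ℝ) (γ₀ γ₁ : Matrix (Fin n) (Fin n) ℂ)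
    (hZ₀ : Z₀ = (Matrix.trace (NormedSpace.exp ((-β : ℂ) • H₀))).re)
    (hZ₁ : Z₁ = (Matrix.trace (NormedSpace.exp ((-β : ℂ) • H₁))).re)
    (hγ₀ : γ₀ = ((Z₀ : ℂ))⁻¹ • NormedSpace.exp ((-β : ℂ) • H₀))
    (hγ₁ : γ₁ = ((Z₁ : ℂ))⁻¹ • NormedSpace.exp ((-β : ℂ) • H₁)) :
    (∑ i, ∑ j,
        Real.exp (-β * (E' j - E i))
          * (Matrix.trace (ρ * outer (v i) * Uᴴ * outer (w j) * U)).re)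
      = (Z₁ / Z₀) * (Matrix.trace (Uᴴ * γ₁ * U * γ₀⁻¹ * ρ)).re
    ∧ (ρ = γ₀ →
        (Z₁ / Z₀) * (Matrix.trace (Uᴴ * γ₁ * U * γ₀⁻¹ * ρ)).re = Z₁ / Z₀) :=
  allahverdyan_fluctuation_equality_general n H₀ H₁ U ρ hH₀ hH₁ hU hρ v w E E' hv hw hvE hwE β Z₀ Z₁
    γ₀ γ₁ hZ₀ hZ₁ hγ₀ hγ₁
end

section
/- Nonnegativity of the work quasi-probability in the commuting cases: let ρ be a density matrix and E, Π orthogonal projections on ℂⁿ. If E Π = Π E, or ρ E = E ρ, or ρ Π = Π ρ, then Re tr(ρ E Π) ≥ 0. (Hence negative values of Allahverdyan's quasi-probability require all three pairs to fail to commute.) -/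
/-!
A star projection is positive semidefinite, and the trace of a product of two positive
semidefinite matrices is nonnegative: writing `B = Cᴴ * C`, `tr (A * B) = tr (C * A * Cᴴ)`.
Each commuting hypothesis regroups `ρ * E * P`, up to a cyclic permutation under the trace, as
such a product: `ρ * (E * P)` with `E * P` a projection, or `(ρ * E) * P` resp. `(ρ * P) * E`,
where a state commuting with a projection `Q` satisfies `ρ * Q = Q * ρ * Q ≥ 0`.
-/

open Matrix
open scoped ComplexOrder MatrixOrder

namespace Matrix

variable {n 𝕜 : Type*} [Fintype n] [RCLike 𝕜]

theorem PosSemidef.trace_mul_nonneg {A B : Matrix n n 𝕜} (hA : A.PosSemidef)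
    (hB : B.PosSemidef) : 0 ≤ (A * B).trace := by
  classical
  obtain ⟨C, rfl⟩ := CStarAlgebra.nonneg_iff_eq_star_mul_self.mp hB.nonneg
  rw [star_eq_conjTranspose, ← Matrix.mul_assoc, trace_mul_cycle]
  exact (hA.mul_mul_conjTranspose_same C).trace_nonneg

theorem _root_.IsStarProjection.posSemidef {Q : Matrix n n 𝕜} (hQ : IsStarProjection Q) :
    Q.PosSemidef :=
  hQ.nonneg.posSemidef

theorem PosSemidef.mul_of_commute_of_isStarProjection {A Q : Matrix n n 𝕜}
    (hA : A.PosSemidef) (hQ : IsStarProjection Q) (hAQ : Commute A Q) :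
    (A * Q).PosSemidef := by
  have hconj : A * Q = Qᴴ * A * Q := by
    rw [← star_eq_conjTranspose, hQ.isSelfAdjoint.star_eq, ← hAQ.eq, Matrix.mul_assoc,
      hQ.isIdempotentElem.eq]
  rw [hconj]
  exact hA.conjTranspose_mul_mul_same Q

end Matrix

theorem weak_value_nonneg_of_commuting_general
    (n : ℕ) (ρ E P : Matrix (Fin n) (Fin n) ℂ)
    (hρ : ρ.PosSemidef)
    (hE : E.IsHermitian) (hE2 : E * E = E)
    (hP : P.IsHermitian) (hP2 : P * P = P)
    (hcomm : E * P = P * E ∨ ρ * E = E * ρ ∨ ρ * P = P * ρ) :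
    0 ≤ (Matrix.trace (ρ * E * P)).re := by
  have hEproj : IsStarProjection E := ⟨hE2, hE⟩
  have hPproj : IsStarProjection P := ⟨hP2, hP⟩
  suffices 0 ≤ (ρ * E * P).trace from (Complex.nonneg_iff.mp this).1
  rcases hcomm with hEP | hρE | hρP
  · rw [Matrix.mul_assoc]
    exact hρ.trace_mul_nonneg (hEproj.mul hPproj hEP).posSemidef
  · exact (hρ.mul_of_commute_of_isStarProjection hEproj hρE).trace_mul_nonneg
      hPproj.posSemidef
  · rw [trace_mul_cycle, ← hρP]
    exact (hρ.mul_of_commute_of_isStarProjection hPproj hρP).trace_mul_nonneg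
      hEproj.posSemidef

/-- Nonnegativity of the work quasi-probability in the commuting
cases: if `ρ` is a density matrix, `E`, `P` orthogonal projections, and `E P = P E`
or `ρ E = E ρ` or `ρ P = P ρ`, then `Re tr(ρ E P) ≥ 0`. -/
theorem weak_value_nonneg_of_commuting
    (n : ℕ) (ρ E P : Matrix (Fin n) (Fin n) ℂ)
    (hρ : ρ.PosSemidef) (hρtr : ρ.trace = 1)
    (hE : E.IsHermitian) (hE2 : E * E = E)
    (hP : P.IsHermitian) (hP2 : P * P = P)
    (hcomm : E * P = P * E ∨ ρ * E = E * ρ ∨ ρ * P = P * ρ) :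
    0 ≤ (Matrix.trace (ρ * E * P)).re :=
  weak_value_nonneg_of_commuting_general n ρ E P hρ hE hE2 hP hP2 hcomm
end

section
/- Existence of anomalous negativity for non-commuting projectors: let E and Π be orthogonal projections on ℂⁿ with E Π ≠ Π E. Then there exists a density matrix ρ such that Re tr(ρ E Π) < 0. (Equivalently, the Hermitian matrix (EΠ + ΠE)/2 has a negative eigenvalue whenever E and Π do not commute; thus in the presence of non-commutativity there is always a state witnessing negativity of the work quasi-probability, and hence contextuality of the weak-measurement protocol.) -/
open Matrix
open scoped ComplexOrder

/-! If `E P + P E` were positive semidefinite, its compression by the complementary projection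
`1 - E` would vanish, so positivity forces `(E P + P E)(1 - E) = 0`, i.e. `E P = E P E`. The
right-hand side is Hermitian, hence `E P = (E P)ᴴ = P E`. So for non-commuting `E` and `P` the
Hermitian part of `E P` has a vector `x` with `Re ⟪x, E P x⟫ < 0`, and the pure state
`x x† / ‖x‖²` is the required density matrix. -/

namespace Matrix

variable {n 𝕜 : Type*} [Fintype n] [RCLike 𝕜]

theorem PosSemidef.mul_eq_zero_of_conjTranspose_mul_mul_eq_zero {m : Type*}
    {S : Matrix n n 𝕜} (hS : S.PosSemidef) {B : Matrix n m 𝕜} (h : Bᴴ * S * B = 0) :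
    S * B = 0 := by
  classical
  open scoped MatrixOrder in
  obtain ⟨C, rfl⟩ := CStarAlgebra.nonneg_iff_eq_star_mul_self.mp hS.nonneg
  have hCB : C * B = 0 := conjTranspose_mul_self_eq_zero.mp <| by
    simpa only [conjTranspose_mul, star_eq_conjTranspose, Matrix.mul_assoc] using h
  rw [Matrix.mul_assoc, hCB, Matrix.mul_zero]

theorem mul_comm_of_posSemidef_mul_add_mul [DecidableEq n] {E P : Matrix n n 𝕜}
    (hE : E.IsHermitian) (hE2 : IsIdempotentElem E) (hP : P.IsHermitian)
    (h : (E * P + P * E).PosSemidef) : E * P = P * E := by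
  have hEF : E * (1 - E) = 0 := by rw [mul_sub, mul_one, hE2.eq, sub_self]
  have hFE : (1 - E) * E = 0 := by rw [sub_mul, one_mul, hE2.eq, sub_self]
  have hF : (1 - E)ᴴ = 1 - E := by rw [conjTranspose_sub, conjTranspose_one, hE.eq]
  have hSF : (E * P + P * E) * (1 - E) = 0 :=
    h.mul_eq_zero_of_conjTranspose_mul_mul_eq_zero <| by
      rw [hF, mul_add, add_mul, ← mul_assoc (1 - E) E, hFE, mul_assoc (1 - E) (P * E), mul_assoc P,
        hEF]
      simp
  have hEPE : E * P = E * P * E := by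
    rw [add_mul, mul_assoc P, hEF, mul_zero, add_zero, mul_sub, mul_one, sub_eq_zero] at hSF
    exact hSF
  calc E * P = E * P * E := hEPE
    _ = (E * P * E)ᴴ := by rw [conjTranspose_mul, conjTranspose_mul, hE.eq, hP.eq, mul_assoc]
    _ = (E * P)ᴴ := by rw [← hEPE]
    _ = P * E := by rw [conjTranspose_mul, hE.eq, hP.eq]

theorem trace_vecMulVec_star_mul (x : n → 𝕜) (M : Matrix n n 𝕜) :
    (vecMulVec x (star x) * M).trace = star x ⬝ᵥ M *ᵥ x := by
  rw [vecMulVec_mul, trace_vecMulVec, dotProduct_comm, dotProduct_mulVec]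

theorem dotProduct_conjTranspose_mulVec (x : n → 𝕜) (M : Matrix n n 𝕜) :
    star x ⬝ᵥ Mᴴ *ᵥ x = star (star x ⬝ᵥ M *ᵥ x) := by
  rw [← star_dotProduct_star, star_star, star_mulVec, dotProduct_mulVec]

theorem dotProduct_add_conjTranspose_mulVec (x : n → 𝕜) (M : Matrix n n 𝕜) :
    star x ⬝ᵥ (M + Mᴴ) *ᵥ x = ((2 * RCLike.re (star x ⬝ᵥ M *ᵥ x) : ℝ) : 𝕜) := by
  rw [add_mulVec, dotProduct_add, dotProduct_conjTranspose_mulVec, RCLike.star_def,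
    RCLike.add_conj]
  push_cast
  rfl


theorem exists_posSemidef_trace_eq_one_re_trace_mul_neg {M : Matrix n n 𝕜}
    (hM : ¬ (M + Mᴴ).PosSemidef) :
    ∃ ρ : Matrix n n 𝕜, ρ.PosSemidef ∧ ρ.trace = 1 ∧ RCLike.re (ρ * M).trace < 0 := by
  obtain ⟨x, hx⟩ : ∃ x, ¬ 0 ≤ star x ⬝ᵥ (M + Mᴴ) *ᵥ x := by
    simpa [posSemidef_iff_dotProduct_mulVec, isHermitian_add_transpose_self] using hM
  have hneg : RCLike.re (star x ⬝ᵥ M *ᵥ x) < 0 := by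
    rw [dotProduct_add_conjTranspose_mulVec, RCLike.ofReal_nonneg] at hx
    linarith
  have hx0 : x ≠ 0 := by
    rintro rfl
    simp at hneg
  obtain ⟨r, hr, hrx⟩ := RCLike.pos_iff_exists_ofReal.mp (dotProduct_star_self_pos_iff.mpr hx0)
  refine ⟨(r⁻¹ : 𝕜) • vecMulVec x (star x), ?_, ?_, ?_⟩
  · exact (posSemidef_vecMulVec_self_star x).smul (by positivity)
  · rw [trace_smul, trace_vecMulVec, dotProduct_comm, ← hrx, smul_eq_mul, inv_mul_cancel₀]
    exact_mod_cast hr.ne'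
  · rw [smul_mul, trace_smul, trace_vecMulVec_star_mul, smul_eq_mul, ← RCLike.ofReal_inv,
      RCLike.re_ofReal_mul]
    exact mul_neg_of_pos_of_neg (inv_pos.mpr hr) hneg

end Matrix

theorem exists_state_with_negative_weak_value_general
    (n : ℕ) (E P : Matrix (Fin n) (Fin n) ℂ)
    (hE : E.IsHermitian) (hE2 : E * E = E)
    (hP : P.IsHermitian)
    (hnc : E * P ≠ P * E) :
    ∃ ρ : Matrix (Fin n) (Fin n) ℂ,
      ρ.PosSemidef ∧ ρ.trace = 1 ∧ (Matrix.trace (ρ * E * P)).re < 0 := by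
  have hS : ¬ (E * P + (E * P)ᴴ).PosSemidef := by
    rw [conjTranspose_mul, hE.eq, hP.eq]
    exact fun h ↦ hnc (mul_comm_of_posSemidef_mul_add_mul hE hE2 hP h)
  obtain ⟨ρ, hρ, htr, hre⟩ := exists_posSemidef_trace_eq_one_re_trace_mul_neg hS
  exact ⟨ρ, hρ, htr, by rwa [mul_assoc]⟩

/-- Existence of anomalous negativity for non-commuting projectors:
if `E` and `P` are orthogonal projections on `ℂⁿ` with `E P ≠ P E`, then there exists a
density matrix `ρ` such that `Re tr(ρ E P) < 0`. -/
theorem exists_state_with_negative_weak_value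
    (n : ℕ) (E P : Matrix (Fin n) (Fin n) ℂ)
    (hE : E.IsHermitian) (hE2 : E * E = E)
    (hP : P.IsHermitian) (hP2 : P * P = P)
    (hnc : E * P ≠ P * E) :
    ∃ ρ : Matrix (Fin n) (Fin n) ℂ,
      ρ.PosSemidef ∧ ρ.trace = 1 ∧ (Matrix.trace (ρ * E * P)).re < 0 :=
  exists_state_with_negative_weak_value_general n E P hE hE2 hP hnc
end
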